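/- In the prompt-tuned memory-augmented HMM with prompt π defined by π_{(m_{1:N},j,s)} = 1 if m_{j*} ∈ supp(b) and 0 otherwise, assume the relaxed multi-memory non-degeneracy condition and stationarity of P(H_0). Define Ĝ_i(x) = W v_i(x) where (v_i(x))_{(m,j,s)} = P(M_j = m, H_i = (j,s) | X̂_{−i} = x̂_{−i}) when P(X̂_{−i} = x̂_{−i}) > 0 and Ĝ_i(x) = 0 otherwise; let e(z) ∈ ℝ^{|𝕄||H|} with e(z)_{(m,j,s)} = W_{z,(m,j,s)}; and let Î(x) = {i+1 : i ∈ [T], supp(P(S_i | X_{−i} = x_{−i})) ⊆ S*, supp(P(J_i | X_{−i} = x_{−i})) ⊆ {j*}}. Then there exist Θ^{(V)} ∈ ℝ^{|𝕄||H|×|X|} and u ∈ ℝ^{|𝕄||H|} such that for every x ∈ X^T with P(X_{1:T} = x) > 0 and Î(x) nonempty, and every i ∈ Î(x): (i) if P(X̂_{−i} = x̂_{−i}) > 0 then u^T ((Θ^{(V)} Ĝ_i(x)) ⊙ e(x̂_i)) = b^T P(X̂_i = x̂_i, M_{j*} | X̂_{−i} = x̂_{−i}); (ii) in all cases u^T ((Θ^{(V)}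 Ĝ_i(x)) ⊙ e(x̂_i)) = r_{x,i} · b^T P(M_{j*} | X_{1:T} = x) for some scalar r_{x,i} > 0. Furthermore, if P(X̂ = x̂) = 0 then u^T ((Θ^{(V)} Ĝ_i(x)) ⊙ e(x̂_i)) = 0 for every i > 1. -/

import Mathlib

/-!
The value matrix is the matrix of a linear map `Φ` sending each column `W_{:,(m,j*,s)}`,
`(m, s) ∈ 𝕄* × S*`, to the corresponding basis vector and killing `V̄`; it exists because these
columns are independent modulo `V̄`. Writing `Ĝ_i(x) = W v_i(x)`, every column outside
`𝕄* × H*` either lies in `V̄` or carries no posterior mass (the 0/1 prompt removes every memory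
with `m_{j*} ∉ 𝕄*`), so `Φ Ĝ_i(x)` is `v_i(x)` restricted to `𝕄* × H*`. With `u = b` the
readout becomes `∑_m b(m_{j*}) P(M = m, X̂ = x̂, H_i ∈ H*) / P(X̂_{−i} = x̂_{−i})`. By
stationarity the chain after the fake token is the original one scaled by the prompt, and for
`i ∈ Î(x)` the event `H_i ∈ H*` carries all the mass; this gives (i), and (ii) with
`r = P(X = x) / P(X̂_{−i} = x̂_{−i})`.
-/

open scoped Classical
open Matrix

noncomputable section

/-- Forward pass for a Markov chain with transition matrix `A`. -/
def fwdVec {H : Type*} [Fintype H] (A : Matrix H H ℝ) :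
    (H → ℝ) → List (H → ℝ) → (H → ℝ)
  | μ, [] => μ
  | μ, v :: vs => fwdVec A (A.mulVec fun h => μ h * v h) vs

/-- `mJointAt A μ W m x i g = P(H_i = g, X_{−i} = x_{−i} | M = m)` in a
memory-augmented HMM (hidden chain `H_1, …, H_T`, `P(H_1) = A μ`). -/
def mJointAt {𝕄 S X : Type*} {N T : ℕ} [Fintype S] [DecidableEq S]
    (A : Matrix (Fin N × S) (Fin N × S) ℝ) (μ : Fin N × S → ℝ)
    (W : X → 𝕄 → Fin N × S → ℝ) (m : Fin N → 𝕄)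
    (x : Fin T → X) (i : Fin T) (g : Fin N × S) : ℝ :=
  ∑ h, fwdVec A (A.mulVec μ)
    (List.ofFn fun k : Fin T =>
      if k = i then (fun g' => if g' = g then 1 else 0)
      else fun g' => W (x k) (m g'.1) g') h

/-- `mZ … x i = P(X_{−i} = x_{−i})`. -/
def mZ {𝕄 S X : Type*} {N T : ℕ} [Fintype 𝕄] [Fintype S] [DecidableEq S]
    (pM : (Fin N → 𝕄) → ℝ) (A : Matrix (Fin N × S) (Fin N × S) ℝ)
    (μ : Fin N × S → ℝ) (W : X → 𝕄 → Fin N × S → ℝ)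
    (x : Fin T → X) (i : Fin T) : ℝ :=
  ∑ m, pM m * ∑ g, mJointAt A μ W m x i g

/-- `mSeqPm … m x = P(X_{1:T} = x | M = m)`. -/
def mSeqPm {𝕄 S X : Type*} {N T : ℕ} [Fintype S]
    (A : Matrix (Fin N × S) (Fin N × S) ℝ) (μ : Fin N × S → ℝ)
    (W : X → 𝕄 → Fin N × S → ℝ) (m : Fin N → 𝕄) (x : Fin T → X) : ℝ :=
  ∑ h, fwdVec A (A.mulVec μ)
    (List.ofFn fun k : Fin T => fun g' => W (x k) (m g'.1) g') h

/-- `mSeqP … x = P(X_{1:T} = x)`. -/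
def mSeqP {𝕄 S X : Type*} {N T : ℕ} [Fintype 𝕄] [Fintype S]
    (pM : (Fin N → 𝕄) → ℝ) (A : Matrix (Fin N × S) (Fin N × S) ℝ)
    (μ : Fin N × S → ℝ) (W : X → 𝕄 → Fin N × S → ℝ) (x : Fin T → X) : ℝ :=
  ∑ m, pM m * mSeqPm A μ W m x

/-- `mGtok … x i z = P(X_i = z | X_{−i} = x_{−i})`, the pretrained model
output `G_i(x)` at position `i`. -/
def mGtok {𝕄 S X : Type*} {N T : ℕ} [Fintype 𝕄] [Fintype S] [DecidableEq S]
    (pM : (Fin N → 𝕄) → ℝ) (A : Matrix (Fin N × S) (Fin N × S) ℝ)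
    (μ : Fin N × S → ℝ) (W : X → 𝕄 → Fin N × S → ℝ)
    (x : Fin T → X) (i : Fin T) (z : X) : ℝ :=
  (∑ m, pM m * ∑ g, mJointAt A μ W m x i g * W z (m g.1) g) / mZ pM A μ W x i

/-- `mPostH … x i g = P(H_i = g | X_{−i} = x_{−i})`. -/
def mPostH {𝕄 S X : Type*} {N T : ℕ} [Fintype 𝕄] [Fintype S] [DecidableEq S]
    (pM : (Fin N → 𝕄) → ℝ) (A : Matrix (Fin N × S) (Fin N × S) ℝ)
    (μ : Fin N × S → ℝ) (W : X → 𝕄 → Fin N × S → ℝ)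
    (x : Fin T → X) (i : Fin T) (g : Fin N × S) : ℝ :=
  (∑ m, pM m * mJointAt A μ W m x i g) / mZ pM A μ W x i

/-- The 0/1 prompt of the paper: `π_{(m_{1:N},j,s)} = 1` if `m_{j*} ∈ supp(b)`
and `0` otherwise (it does not depend on `(j,s)`). -/
def promptV {𝕄 : Type*} {N : ℕ} (b : 𝕄 → ℝ) (jstar : Fin N)
    (m : Fin N → 𝕄) : ℝ :=
  if b (m jstar) ≠ 0 then 1 else 0

/-- Conditioned on `M = m`, the emission-likelihood vector at position `k`
(0-indexed) of the modified sequence `x̂ = (z̃, x_1, …, x_T)`: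
at position `0` the fake token `z̃` has likelihood `π_{(m,j,s)}`, and at
position `k ≥ 1` the token `x_k` has likelihood `W (x_k) (m j) (j,s)`. -/
def hatEm {𝕄 S X : Type*} {N T : ℕ} (W : X → 𝕄 → Fin N × S → ℝ)
    (b : 𝕄 → ℝ) (jstar : Fin N) (m : Fin N → 𝕄) (x : Fin T → X)
    (k : Fin (T + 1)) : Fin N × S → ℝ :=
  if hk : (k : ℕ) = 0 then fun _ => promptV b jstar m
  else fun g => W (x ⟨(k : ℕ) - 1, by have := k.isLt; omega⟩) (m g.1) g

/-- `hatJointAt … m x i g = P(H_i = g, X̂_{−i} = x̂_{−i} | M = m)` for the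
modified sequence `X̂` of length `T+1` (hidden chain `H_1, …, H_{T+1}`,
`P(H_1) = A μ`). -/
def hatJointAt {𝕄 S X : Type*} {N T : ℕ} [Fintype S] [DecidableEq S]
    (A : Matrix (Fin N × S) (Fin N × S) ℝ) (μ : Fin N × S → ℝ)
    (W : X → 𝕄 → Fin N × S → ℝ) (b : 𝕄 → ℝ) (jstar : Fin N)
    (m : Fin N → 𝕄) (x : Fin T → X) (i : Fin (T + 1)) (g : Fin N × S) : ℝ :=
  ∑ h, fwdVec A (A.mulVec μ)
    (List.ofFn fun k : Fin (T + 1) =>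
      if k = i then (fun g' => if g' = g then 1 else 0)
      else hatEm W b jstar m x k) h

/-- `hatZ … x i = P(X̂_{−i} = x̂_{−i})`. -/
def hatZ {𝕄 S X : Type*} {N T : ℕ} [Fintype 𝕄] [Fintype S] [DecidableEq S]
    (pM : (Fin N → 𝕄) → ℝ) (A : Matrix (Fin N × S) (Fin N × S) ℝ)
    (μ : Fin N × S → ℝ) (W : X → 𝕄 → Fin N × S → ℝ) (b : 𝕄 → ℝ)
    (jstar : Fin N) (x : Fin T → X) (i : Fin (T + 1)) : ℝ :=
  ∑ m, pM m * ∑ g, hatJointAt A μ W b jstar m x i g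

/-- `hatSeqPm … m x = P(X̂ = x̂ | M = m)`. -/
def hatSeqPm {𝕄 S X : Type*} {N T : ℕ} [Fintype S]
    (A : Matrix (Fin N × S) (Fin N × S) ℝ) (μ : Fin N × S → ℝ)
    (W : X → 𝕄 → Fin N × S → ℝ) (b : 𝕄 → ℝ) (jstar : Fin N)
    (m : Fin N → 𝕄) (x : Fin T → X) : ℝ :=
  ∑ h, fwdVec A (A.mulVec μ) (List.ofFn (hatEm W b jstar m x)) h

/-- `hatSeqP … x = P(X̂ = x̂)`. -/
def hatSeqP {𝕄 S X : Type*} {N T : ℕ} [Fintype 𝕄] [Fintype S]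
    (pM : (Fin N → 𝕄) → ℝ) (A : Matrix (Fin N × S) (Fin N × S) ℝ)
    (μ : Fin N × S → ℝ) (W : X → 𝕄 → Fin N × S → ℝ) (b : 𝕄 → ℝ)
    (jstar : Fin N) (x : Fin T → X) : ℝ :=
  ∑ m, pM m * hatSeqPm A μ W b jstar m x

/-- `hatGvec … x i z = (W v_i(x)) z` where
`(v_i(x))_{(m,j,s)} = P(M_j = m, H_i = (j,s) | X̂_{−i} = x̂_{−i})`:
the model output `Ĝ_i(x)` on the prompted input. -/
def hatGvec {𝕄 S X : Type*} {N T : ℕ} [Fintype 𝕄] [Fintype S] [Fintype X]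
    [DecidableEq 𝕄] [DecidableEq S]
    (pM : (Fin N → 𝕄) → ℝ) (A : Matrix (Fin N × S) (Fin N × S) ℝ)
    (μ : Fin N × S → ℝ) (W : X → 𝕄 → Fin N × S → ℝ) (b : 𝕄 → ℝ)
    (jstar : Fin N) (x : Fin T → X) (i : Fin (T + 1)) (z : X) : ℝ :=
  ∑ p : 𝕄 × (Fin N × S), W z p.1 p.2 *
    ((∑ m, if m p.2.1 = p.1 then pM m * hatJointAt A μ W b jstar m x i p.2 else 0)
      / hatZ pM A μ W b jstar x i)

/-- `hatGtot` is `Ĝ_i(x)` with the convention `Ĝ_i(x) = 0` when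
`P(X̂_{−i} = x̂_{−i}) = 0`. -/
def hatGtot {𝕄 S X : Type*} {N T : ℕ} [Fintype 𝕄] [Fintype S] [Fintype X]
    [DecidableEq 𝕄] [DecidableEq S]
    (pM : (Fin N → 𝕄) → ℝ) (A : Matrix (Fin N × S) (Fin N × S) ℝ)
    (μ : Fin N × S → ℝ) (W : X → 𝕄 → Fin N × S → ℝ) (b : 𝕄 → ℝ)
    (jstar : Fin N) (x : Fin T → X) (i : Fin (T + 1)) (z : X) : ℝ :=
  if 0 < hatZ pM A μ W b jstar x i then hatGvec pM A μ W b jstar x i z else 0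

section Forward

variable {H : Type*} [Fintype H] (A : Matrix H H ℝ)

lemma fwdVec_add (l : List (H → ℝ)) (μ ν : H → ℝ) :
    fwdVec A (μ + ν) l = fwdVec A μ l + fwdVec A ν l := by
  induction l generalizing μ ν with
  | nil => rfl
  | cons v l ih =>
    simp only [fwdVec, Pi.add_apply, add_mul, ← ih]
    rw [← mulVec_add]
    rfl

lemma fwdVec_smul (l : List (H → ℝ)) (c : ℝ) (μ : H → ℝ) :
    fwdVec A (c • μ) l = c • fwdVec A μ l := by
  induction l generalizing μ with
  | nil => rfl
  | cons v l ih =>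
    simp only [fwdVec, Pi.smul_apply, smul_eq_mul, mul_assoc, ← ih]
    rw [← mulVec_smul]
    rfl

def fwdLinearMap (l : List (H → ℝ)) : (H → ℝ) →ₗ[ℝ] H → ℝ where
  toFun μ := fwdVec A μ l
  map_add' := fwdVec_add A l
  map_smul' := fwdVec_smul A l

lemma fwdVec_nonneg (hA : ∀ g g', 0 ≤ A g' g) :
    ∀ (l : List (H → ℝ)) (μ : H → ℝ), 0 ≤ μ → (∀ v ∈ l, 0 ≤ v) → 0 ≤ fwdVec A μ l
  | [], _, hμ, _ => hμ
  | v :: l, μ, hμ, hl => by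
    refine fwdVec_nonneg hA l _ (fun h => ?_) fun w hw => hl w (List.mem_cons_of_mem _ hw)
    exact Finset.sum_nonneg fun g _ =>
      mul_nonneg (hA _ _) (mul_nonneg (hμ g) (hl v List.mem_cons_self g))

lemma sum_fwdVec_ofFn_nonneg (hA : ∀ g g', 0 ≤ A g' g) {μ : H → ℝ} (hμ : 0 ≤ μ) {n : ℕ}
    {E : Fin n → H → ℝ} (hE : ∀ k, 0 ≤ E k) : 0 ≤ ∑ h, fwdVec A (A *ᵥ μ) (List.ofFn E) h := by
  refine Finset.sum_nonneg fun h _ => fwdVec_nonneg A hA _ _ ?_ ?_ h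
  · exact fun h => Finset.sum_nonneg fun g _ => mul_nonneg (hA _ _) (hμ g)
  · simp only [List.mem_ofFn, forall_exists_index]
    rintro v k rfl
    exact hE k

lemma fwdVec_const_cons (c : ℝ) (μ : H → ℝ) (l : List (H → ℝ)) :
    fwdVec A μ ((fun _ => c) :: l) = c • fwdVec A (A *ᵥ μ) l := by
  rw [fwdVec, ← fwdVec_smul, ← mulVec_smul]
  congr 2
  ext h
  simp [mul_comm]

variable [DecidableEq H]

lemma fwdVec_cons_eq_sum (μ v : H → ℝ) (l : List (H → ℝ)) :
    fwdVec A μ (v :: l)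
      = ∑ g, v g • fwdVec A μ ((fun h => if h = g then 1 else 0) :: l) := by
  have hsplit : (fun h => μ h * v h) = ∑ g, v g • fun h => μ h * if h = g then 1 else 0 := by
    ext h
    simp [Finset.sum_apply, mul_comm]
  simp only [fwdVec]
  rw [hsplit, mulVec_sum]
  simp only [mulVec_smul]
  exact (map_sum (fwdLinearMap A l) _ _).trans (Finset.sum_congr rfl fun g _ => map_smul _ _ _)

lemma fwdVec_ofFn_eq_sum {n : ℕ} (E : Fin n → H → ℝ) (i : Fin n) (μ : H → ℝ) :
    fwdVec A μ (List.ofFn E) = ∑ g, E i g • fwdVec A μ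
      (List.ofFn fun k => if k = i then (fun h => if h = g then 1 else 0) else E k) := by
  induction n generalizing μ with
  | zero => exact i.elim0
  | succ n ih =>
    simp only [List.ofFn_succ]
    cases i using Fin.cases with
    | zero =>
      simp only [if_true, Fin.succ_ne_zero, if_false]
      exact fwdVec_cons_eq_sum A μ (E 0) _
    | succ i =>
      simp only [(Fin.succ_ne_zero i).symm, if_false, Fin.succ_inj, fwdVec]
      exact ih (fun k => E k.succ) i _

end Forward

theorem LinearIndependent.exists_linearMap_eq_single_of_disjoint {K V ι : Type*} [Field K]
    [AddCommGroup V] [Module K V] {w : ι → V} (hw : LinearIndependent K w)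
    {U : Submodule K V} (hU : Disjoint (Submodule.span K (Set.range w)) U) :
    ∃ Φ : V →ₗ[K] ι →₀ K, (∀ i, Φ (w i) = Finsupp.single i 1) ∧ U ≤ LinearMap.ker Φ := by
  have hwU : LinearIndependent K (U.mkQ ∘ w) := hw.map (by rwa [Submodule.ker_mkQ])
  obtain ⟨g, hg⟩ := LinearMap.exists_leftInverse_of_injective
    (Finsupp.linearCombination K (U.mkQ ∘ w)) (LinearMap.ker_eq_bot.mpr hwU)
  refine ⟨g ∘ₗ U.mkQ, fun i => ?_, fun v hv => ?_⟩
  · simpa using LinearMap.congr_fun hg (Finsupp.single i 1)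
  · simp [(Submodule.Quotient.mk_eq_zero U).mpr hv]

lemma sum_mul_sum_ite_div {ι M : Type*} [Fintype ι] [Fintype M] [DecidableEq M] (κ : ι → M)
    (f : M → ℝ) (t : ι → ℝ) (c : ℝ) :
    ∑ m0, f m0 * ((∑ i, if κ i = m0 then t i else 0) / c) = (∑ i, f (κ i) * t i) / c := by
  simp_rw [← mul_div_assoc, ← Finset.sum_div, Finset.mul_sum, mul_ite, mul_zero]
  rw [Finset.sum_comm]
  simp

section Model

variable {𝕄 S X : Type*} {N T : ℕ} [Fintype S] [DecidableEq S]
  (A : Matrix (Fin N × S) (Fin N × S) ℝ) (μ : Fin N × S → ℝ)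
  (W : X → 𝕄 → Fin N × S → ℝ) (b : 𝕄 → ℝ) (jstar : Fin N)

lemma promptV_nonneg (m : Fin N → 𝕄) : 0 ≤ promptV b jstar m := by
  unfold promptV; split <;> norm_num

lemma mul_promptV (m : Fin N → 𝕄) : b (m jstar) * promptV b jstar m = b (m jstar) := by
  unfold promptV; split <;> simp_all

lemma mJointAt_nonneg (hμ0 : ∀ g, 0 ≤ μ g) (hA0 : ∀ g g', 0 ≤ A g' g)
    (hW0 : ∀ z m0 g, 0 ≤ W z m0 g) (m : Fin N → 𝕄) (x : Fin T → X) (i : Fin T)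
    (g : Fin N × S) : 0 ≤ mJointAt A μ W m x i g := by
  refine sum_fwdVec_ofFn_nonneg A hA0 hμ0 fun k g' => ?_
  split
  · dsimp only; split <;> norm_num
  · exact hW0 _ _ _

/-- `mSeqPmOn … m x i G = P(X_{1:T} = x, H_i ∈ G | M = m)`. -/
def mSeqPmOn (m : Fin N → 𝕄) (x : Fin T → X) (i : Fin T) (G : Finset (Fin N × S)) : ℝ :=
  ∑ g ∈ G, mJointAt A μ W m x i g * W (x i) (m g.1) g

lemma mSeqPm_eq_mSeqPmOn_univ (m : Fin N → 𝕄) (x : Fin T → X) (i : Fin T) :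
    mSeqPm A μ W m x = mSeqPmOn A μ W m x i Finset.univ := by
  unfold mSeqPm mSeqPmOn mJointAt
  rw [fwdVec_ofFn_eq_sum A _ i]
  simp only [Finset.sum_apply, Pi.smul_apply, smul_eq_mul]
  rw [Finset.sum_comm]
  refine Finset.sum_congr rfl fun g _ => ?_
  rw [Finset.sum_mul]
  exact Finset.sum_congr rfl fun _ _ => mul_comm _ _

lemma mSeqPmOn_nonneg (hμ0 : ∀ g, 0 ≤ μ g) (hA0 : ∀ g g', 0 ≤ A g' g)
    (hW0 : ∀ z m0 g, 0 ≤ W z m0 g) (m : Fin N → 𝕄) (x : Fin T → X) (i : Fin T)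
    (G : Finset (Fin N × S)) : 0 ≤ mSeqPmOn A μ W m x i G :=
  Finset.sum_nonneg fun g _ => mul_nonneg (mJointAt_nonneg A μ W hμ0 hA0 hW0 m x i g) (hW0 _ _ _)

lemma mSeqPmOn_le_mSeqPm (hμ0 : ∀ g, 0 ≤ μ g) (hA0 : ∀ g g', 0 ≤ A g' g)
    (hW0 : ∀ z m0 g, 0 ≤ W z m0 g) (m : Fin N → 𝕄) (x : Fin T → X) (i : Fin T)
    (G : Finset (Fin N × S)) : mSeqPmOn A μ W m x i G ≤ mSeqPm A μ W m x := by
  rw [mSeqPm_eq_mSeqPmOn_univ A μ W m x i]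
  exact Finset.sum_le_sum_of_subset_of_nonneg (Finset.subset_univ G) fun g _ _ =>
    mul_nonneg (mJointAt_nonneg A μ W hμ0 hA0 hW0 m x i g) (hW0 _ _ _)

lemma mul_mSeqPmOn_eq_mul_mSeqPm {c : ℝ} {m : Fin N → 𝕄} {x : Fin T → X} {i : Fin T}
    {G : Finset (Fin N × S)} (hG : ∀ g ∉ G, c * mJointAt A μ W m x i g = 0) :
    c * mSeqPmOn A μ W m x i G = c * mSeqPm A μ W m x := by
  rw [mSeqPm_eq_mSeqPmOn_univ A μ W m x i, mSeqPmOn, mSeqPmOn, Finset.mul_sum, Finset.mul_sum]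
  exact Finset.sum_subset (Finset.subset_univ G) fun g _ hg => by rw [← mul_assoc, hG g hg, zero_mul]

end Model

section Prompted

variable {𝕄 S X : Type*} {N T : ℕ} (W : X → 𝕄 → Fin N × S → ℝ) (b : 𝕄 → ℝ) (jstar : Fin N)
  (m : Fin N → 𝕄) (x : Fin T → X)

lemma hatEm_zero : hatEm W b jstar m x 0 = fun _ => promptV b jstar m := rfl

lemma hatEm_succ (k : Fin T) : hatEm W b jstar m x k.succ = fun g => W (x k) (m g.1) g := by
  simp [hatEm, Fin.val_succ]

lemma hatEm_nonneg (hW0 : ∀ z m0 g, 0 ≤ W z m0 g) (k : Fin (T + 1)) :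
    0 ≤ hatEm W b jstar m x k := by
  cases k using Fin.cases with
  | zero => exact fun _ => promptV_nonneg b jstar m
  | succ k => rw [hatEm_succ]; exact fun g => hW0 _ _ _

variable [Fintype S] (A : Matrix (Fin N × S) (Fin N × S) ℝ) (μ : Fin N × S → ℝ)

lemma hatSeqPm_nonneg (hμ0 : ∀ g, 0 ≤ μ g) (hA0 : ∀ g g', 0 ≤ A g' g)
    (hW0 : ∀ z m0 g, 0 ≤ W z m0 g) : 0 ≤ hatSeqPm A μ W b jstar m x :=
  sum_fwdVec_ofFn_nonneg A hA0 hμ0 (hatEm_nonneg W b jstar m x hW0)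

lemma hatSeqPm_eq (hstat : A *ᵥ μ = μ) :
    hatSeqPm A μ W b jstar m x = promptV b jstar m * mSeqPm A μ W m x := by
  unfold hatSeqPm mSeqPm
  simp only [List.ofFn_succ, hatEm_zero, hatEm_succ]
  rw [hstat, fwdVec_const_cons, hstat, Finset.mul_sum]
  rfl

variable [DecidableEq S]

lemma promptV_mul_mSeqPmOn_le_hatSeqPm (hμ0 : ∀ g, 0 ≤ μ g) (hA0 : ∀ g g', 0 ≤ A g' g)
    (hW0 : ∀ z m0 g, 0 ≤ W z m0 g) (hstat : A *ᵥ μ = μ) (i : Fin T) (G : Finset (Fin N × S)) :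
    promptV b jstar m * mSeqPmOn A μ W m x i G ≤ hatSeqPm A μ W b jstar m x := by
  rw [hatSeqPm_eq W b jstar m x A μ hstat]
  exact mul_le_mul_of_nonneg_left (mSeqPmOn_le_mSeqPm A μ W hμ0 hA0 hW0 m x i G)
    (promptV_nonneg b jstar m)

lemma hatJointAt_nonneg (hμ0 : ∀ g, 0 ≤ μ g) (hA0 : ∀ g g', 0 ≤ A g' g)
    (hW0 : ∀ z m0 g, 0 ≤ W z m0 g) (i : Fin (T + 1)) (g : Fin N × S) :
    0 ≤ hatJointAt A μ W b jstar m x i g := by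
  refine sum_fwdVec_ofFn_nonneg A hA0 hμ0 fun k g' => ?_
  split
  · dsimp only; split <;> norm_num
  · exact hatEm_nonneg W b jstar m x hW0 k g'

lemma hatJointAt_succ (hstat : A *ᵥ μ = μ) (i : Fin T) (g : Fin N × S) :
    hatJointAt A μ W b jstar m x i.succ g = promptV b jstar m * mJointAt A μ W m x i g := by
  unfold hatJointAt mJointAt
  simp only [List.ofFn_succ, (Fin.succ_ne_zero i).symm, if_false, Fin.succ_inj, hatEm_zero,
    hatEm_succ]
  rw [hstat, fwdVec_const_cons, hstat, Finset.mul_sum]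
  rfl

lemma hatSeqPm_eq_sum (hstat : A *ᵥ μ = μ) (i : Fin T) :
    hatSeqPm A μ W b jstar m x
      = ∑ g, hatJointAt A μ W b jstar m x i.succ g * W (x i) (m g.1) g := by
  simp only [hatSeqPm_eq W b jstar m x A μ hstat, mSeqPm_eq_mSeqPmOn_univ A μ W m x i, mSeqPmOn,
    Finset.mul_sum, hatJointAt_succ W b jstar m x A μ hstat, mul_assoc]

end Prompted

section Posterior

variable {𝕄 S X : Type*} {N T : ℕ} [Fintype 𝕄] [Fintype S] [DecidableEq S]
  (pM : (Fin N → 𝕄) → ℝ) (A : Matrix (Fin N × S) (Fin N × S) ℝ) (μ : Fin N × S → ℝ)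
  (W : X → 𝕄 → Fin N × S → ℝ) (x : Fin T → X)

lemma pM_mul_mJointAt_eq_zero_of_mPostH_eq_zero (hpM0 : ∀ m, 0 ≤ pM m)
    (hμ0 : ∀ g, 0 ≤ μ g) (hA0 : ∀ g g', 0 ≤ A g' g) (hW0 : ∀ z m0 g, 0 ≤ W z m0 g)
    {i : Fin T} {g : Fin N × S} (h : mPostH pM A μ W x i g = 0) (m : Fin N → 𝕄) :
    pM m * mJointAt A μ W m x i g = 0 := by
  have hterm : ∀ m g, 0 ≤ pM m * mJointAt A μ W m x i g :=
    fun m g => mul_nonneg (hpM0 m) (mJointAt_nonneg A μ W hμ0 hA0 hW0 m x i g)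
  have hnum : ∑ m, pM m * mJointAt A μ W m x i g = 0 := by
    rcases div_eq_zero_iff.mp h with h | h
    · exact h
    · have hZ : mZ pM A μ W x i = ∑ g, ∑ m, pM m * mJointAt A μ W m x i g := by
        simp_rw [mZ, Finset.mul_sum]
        exact Finset.sum_comm
      exact (Finset.sum_eq_zero_iff_of_nonneg fun g _ =>
        Finset.sum_nonneg fun m _ => hterm m g).mp (hZ ▸ h) g (Finset.mem_univ g)
  exact (Finset.sum_eq_zero_iff_of_nonneg fun m _ => hterm m g).mp hnum m (Finset.mem_univ m)

lemma mPostH_nonneg (hpM0 : ∀ m, 0 ≤ pM m) (hμ0 : ∀ g, 0 ≤ μ g) (hA0 : ∀ g g', 0 ≤ A g' g)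
    (hW0 : ∀ z m0 g, 0 ≤ W z m0 g) (i : Fin T) (g : Fin N × S) :
    0 ≤ mPostH pM A μ W x i g := by
  have hJ := mJointAt_nonneg A μ W hμ0 hA0 hW0 (x := x) (i := i)
  exact div_nonneg (Finset.sum_nonneg fun m _ => mul_nonneg (hpM0 m) (hJ m g))
    (Finset.sum_nonneg fun m _ => mul_nonneg (hpM0 m) (Finset.sum_nonneg fun g _ => hJ m g))

lemma pM_mul_mJointAt_eq_zero_of_notMem (hpM0 : ∀ m, 0 ≤ pM m) (hμ0 : ∀ g, 0 ≤ μ g)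
    (hA0 : ∀ g g', 0 ≤ A g' g) (hW0 : ∀ z m0 g, 0 ≤ W z m0 g) {jstar : Fin N}
    {Sstar : Finset S} {i : Fin T}
    (hS : ∀ s : S, s ∉ Sstar → ∑ j, mPostH pM A μ W x i (j, s) = 0)
    (hJ : ∀ j : Fin N, j ≠ jstar → ∑ s, mPostH pM A μ W x i (j, s) = 0)
    {g : Fin N × S} (hg : g ∉ ({jstar} ×ˢ Sstar : Finset _)) (m : Fin N → 𝕄) :
    pM m * mJointAt A μ W m x i g = 0 := by
  have hnn := mPostH_nonneg pM A μ W x hpM0 hμ0 hA0 hW0 i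
  refine pM_mul_mJointAt_eq_zero_of_mPostH_eq_zero pM A μ W x hpM0 hμ0 hA0 hW0 ?_ m
  obtain ⟨j, s⟩ := g
  simp only [Finset.mem_product, Finset.mem_singleton, not_and_or] at hg
  rcases hg with hj | hs
  · exact (Finset.sum_eq_zero_iff_of_nonneg fun s _ => hnn _).mp (hJ j hj) s (Finset.mem_univ s)
  · exact (Finset.sum_eq_zero_iff_of_nonneg fun j _ => hnn _).mp (hS s hs) j (Finset.mem_univ j)

end Posterior

section PromptedPosterior

variable {𝕄 S X : Type*} {N T : ℕ} [Fintype 𝕄] [Fintype S] [DecidableEq S]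
  (pM : (Fin N → 𝕄) → ℝ) (A : Matrix (Fin N × S) (Fin N × S) ℝ) (μ : Fin N × S → ℝ)
  (W : X → 𝕄 → Fin N × S → ℝ) (b : 𝕄 → ℝ) (jstar : Fin N) (x : Fin T → X)

lemma hatZ_nonneg (hpM0 : ∀ m, 0 ≤ pM m) (hμ0 : ∀ g, 0 ≤ μ g) (hA0 : ∀ g g', 0 ≤ A g' g)
    (hW0 : ∀ z m0 g, 0 ≤ W z m0 g) (i : Fin (T + 1)) : 0 ≤ hatZ pM A μ W b jstar x i :=
  Finset.sum_nonneg fun m _ => mul_nonneg (hpM0 m) <| Finset.sum_nonneg fun g _ =>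
    hatJointAt_nonneg W b jstar m x A μ hμ0 hA0 hW0 i g

lemma pM_mul_hatSeqPm_eq_zero_of_hatZ_eq_zero (hpM0 : ∀ m, 0 ≤ pM m) (hμ0 : ∀ g, 0 ≤ μ g)
    (hA0 : ∀ g g', 0 ≤ A g' g) (hW0 : ∀ z m0 g, 0 ≤ W z m0 g) (hstat : A *ᵥ μ = μ)
    {i : Fin T} (hZ : hatZ pM A μ W b jstar x i.succ = 0) (m : Fin N → 𝕄) :
    pM m * hatSeqPm A μ W b jstar m x = 0 := by
  have hJ := fun m => hatJointAt_nonneg W b jstar m x A μ hμ0 hA0 hW0 i.succ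
  have hm : pM m * ∑ g, hatJointAt A μ W b jstar m x i.succ g = 0 :=
    (Finset.sum_eq_zero_iff_of_nonneg fun m _ => mul_nonneg (hpM0 m)
      (Finset.sum_nonneg fun g _ => hJ m g)).mp hZ m (Finset.mem_univ m)
  rw [Finset.mul_sum] at hm
  have hg := (Finset.sum_eq_zero_iff_of_nonneg fun g _ => mul_nonneg (hpM0 m) (hJ m g)).mp hm
  rw [hatSeqPm_eq_sum W b jstar m x A μ hstat i, Finset.mul_sum]
  exact Finset.sum_eq_zero fun g _ => by rw [← mul_assoc, hg g (Finset.mem_univ g), zero_mul]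

variable [DecidableEq 𝕄]

/-- `hatPost … x i (m0, (j, s)) = P(M_j = m0, H_i = (j, s) | X̂_{−i} = x̂_{−i})`, the vector
`v_i(x)` of the paper. -/
def hatPost (i : Fin (T + 1)) (q : 𝕄 × (Fin N × S)) : ℝ :=
  (∑ m, if m q.2.1 = q.1 then pM m * hatJointAt A μ W b jstar m x i q.2 else 0)
    / hatZ pM A μ W b jstar x i

/-- Thanks to `x / 0 = 0`, the convention `Ĝ_i(x) = 0` off the support is automatic. -/
lemma hatGtot_eq_sum [Fintype X] (hpM0 : ∀ m, 0 ≤ pM m) (hμ0 : ∀ g, 0 ≤ μ g)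
    (hA0 : ∀ g g', 0 ≤ A g' g) (hW0 : ∀ z m0 g, 0 ≤ W z m0 g) (i : Fin (T + 1)) :
    hatGtot pM A μ W b jstar x i = ∑ q, hatPost pM A μ W b jstar x i q • fun z => W z q.1 q.2 := by
  ext z
  simp only [Finset.sum_apply, Pi.smul_apply, smul_eq_mul]
  unfold hatGtot
  split_ifs with hZ
  · exact Finset.sum_congr rfl fun q _ => mul_comm _ _
  · have hZ0 : hatZ pM A μ W b jstar x i = 0 :=
      le_antisymm (not_lt.mp hZ) (hatZ_nonneg pM A μ W b jstar x hpM0 hμ0 hA0 hW0 i)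
    simp [hatPost, hZ0]

lemma hatPost_succ_eq_zero (hstat : A *ᵥ μ = μ) (i : Fin T) {m0 : 𝕄} (hb : b m0 = 0) (s : S) :
    hatPost pM A μ W b jstar x i.succ (m0, (jstar, s)) = 0 := by
  refine div_eq_zero_iff.mpr (Or.inl (Finset.sum_eq_zero fun m _ => ?_))
  split_ifs with hm
  · simp [hatJointAt_succ W b jstar m x A μ hstat, promptV, hm, hb]
  · rfl

end PromptedPosterior

structure IsValueMap {𝕄 S X : Type*} {N : ℕ} [DecidableEq 𝕄] [DecidableEq S]
    (W : X → 𝕄 → Fin N × S → ℝ) (b : 𝕄 → ℝ) (jstar : Fin N) (Sstar : Finset S)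
    (Φ : (X → ℝ) →ₗ[ℝ] 𝕄 × (Fin N × S) → ℝ) : Prop where
  apply_mem : ∀ m0 s, b m0 ≠ 0 → s ∈ Sstar →
    Φ (fun z => W z m0 (jstar, s)) = Pi.single (m0, (jstar, s)) 1
  apply_notMem : ∀ m0 s, b m0 ≠ 0 → s ∉ Sstar → Φ (fun z => W z m0 (jstar, s)) = 0
  apply_ne : ∀ m0 j s, j ≠ jstar → Φ (fun z => W z m0 (j, s)) = 0

lemma exists_valueMap {𝕄 S X : Type*} {N : ℕ} [Fintype X] [DecidableEq 𝕄] [DecidableEq S]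
    (W : X → 𝕄 → Fin N × S → ℝ) (b : 𝕄 → ℝ) (jstar : Fin N) (Sstar : Finset S)
    (hli : LinearIndependent ℝ
      (fun p : {m0 : 𝕄 // b m0 ≠ 0} × {s : S // s ∈ Sstar} =>
        fun z : X => W z p.1.1 (jstar, p.2.1)))
    (hspan : Submodule.span ℝ
        {f : X → ℝ | ∃ m0 : 𝕄, ∃ s : S,
          b m0 ≠ 0 ∧ s ∈ Sstar ∧ f = fun z => W z m0 (jstar, s)}
      ⊓ Submodule.span ℝ
        {f : X → ℝ |
          (∃ m0 : 𝕄, ∃ s : S,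
            b m0 ≠ 0 ∧ s ∉ Sstar ∧ f = fun z => W z m0 (jstar, s))
          ∨ (∃ m0 : 𝕄, ∃ j : Fin N, ∃ s : S,
            j ≠ jstar ∧ f = fun z => W z m0 (j, s))}
      = ⊥) :
    ∃ Φ : (X → ℝ) →ₗ[ℝ] 𝕄 × (Fin N × S) → ℝ, IsValueMap W b jstar Sstar Φ := by
  have hrange : Set.range (fun p : {m0 : 𝕄 // b m0 ≠ 0} × {s : S // s ∈ Sstar} =>
      fun z : X => W z p.1.1 (jstar, p.2.1))
      = {f : X → ℝ | ∃ m0 : 𝕄, ∃ s : S,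
          b m0 ≠ 0 ∧ s ∈ Sstar ∧ f = fun z => W z m0 (jstar, s)} := by
    ext f
    constructor
    · rintro ⟨⟨⟨m0, hm0⟩, ⟨s, hs⟩⟩, rfl⟩
      exact ⟨m0, s, hm0, hs, rfl⟩
    · rintro ⟨m0, s, hm0, hs, rfl⟩
      exact ⟨⟨⟨m0, hm0⟩, ⟨s, hs⟩⟩, rfl⟩
  obtain ⟨Φ₀, hΦ₀, hker⟩ :=
    hli.exists_linearMap_eq_single_of_disjoint (by rw [disjoint_iff, hrange]; exact hspan)
  refine ⟨Finsupp.lcoeFun ∘ₗ Finsupp.lmapDomain ℝ ℝ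
    (fun p : {m0 : 𝕄 // b m0 ≠ 0} × {s : S // s ∈ Sstar} => (p.1.1, (jstar, p.2.1))) ∘ₗ Φ₀,
    ⟨fun m0 s hm0 hs => ?_, fun m0 s hm0 hs => ?_, fun m0 j s hj => ?_⟩⟩
  · have := hΦ₀ ⟨⟨m0, hm0⟩, ⟨s, hs⟩⟩
    simp only [LinearMap.comp_apply] at this ⊢
    rw [this]
    simp [Finsupp.single_eq_pi_single]
  · simp [LinearMap.mem_ker.mp (hker (Submodule.subset_span (Or.inl ⟨m0, s, hm0, hs, rfl⟩)))]
  · simp [LinearMap.mem_ker.mp (hker (Submodule.subset_span (Or.inr ⟨m0, j, s, hj, rfl⟩)))]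

lemma IsValueMap.apply_sum {𝕄 S X : Type*} {N : ℕ} [Fintype 𝕄] [Fintype S] [DecidableEq 𝕄]
    [DecidableEq S] {W : X → 𝕄 → Fin N × S → ℝ} {b : 𝕄 → ℝ} {jstar : Fin N} {Sstar : Finset S}
    {Φ : (X → ℝ) →ₗ[ℝ] 𝕄 × (Fin N × S) → ℝ} (hΦ : IsValueMap W b jstar Sstar Φ)
    (v : 𝕄 × (Fin N × S) → ℝ) (hv : ∀ m0 s, b m0 = 0 → v (m0, (jstar, s)) = 0) :
    Φ (∑ q, v q • fun z => W z q.1 q.2)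
      = fun p => if b p.1 ≠ 0 ∧ p.2 ∈ ({jstar} ×ˢ Sstar : Finset _) then v p else 0 := by
  have hterm : ∀ q : 𝕄 × (Fin N × S), v q • Φ (fun z => W z q.1 q.2)
      = if b q.1 ≠ 0 ∧ q.2 ∈ ({jstar} ×ˢ Sstar : Finset _) then Pi.single q (v q) else 0 := by
    rintro ⟨m0, j, s⟩
    by_cases hj : j = jstar
    · subst hj
      by_cases hb : b m0 = 0
      · simp [hv m0 s hb]
      by_cases hs : s ∈ Sstar
      · simp [hΦ.apply_mem m0 s hb hs, hb, hs, ← Pi.single_smul]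
      · simp [hΦ.apply_notMem m0 s hb hs, hs]
    · simp [hΦ.apply_ne m0 j s hj, Ne.symm hj]
  ext p
  simp only [map_sum, map_smul, hterm, Finset.sum_apply]
  rw [Finset.sum_eq_single p (fun q _ hqp => by split_ifs <;> simp [hqp.symm]) (by simp)]
  split_ifs <;> simp

section Readout

variable {𝕄 S X : Type*} {N T : ℕ} [Fintype 𝕄] [Fintype S] [Fintype X] [DecidableEq 𝕄]
  [DecidableEq S] (pM : (Fin N → 𝕄) → ℝ) (A : Matrix (Fin N × S) (Fin N × S) ℝ)
  (μ : Fin N × S → ℝ) (W : X → 𝕄 → Fin N × S → ℝ) (b : 𝕄 → ℝ) (jstar : Fin N) (x : Fin T → X)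
  (Sstar : Finset S) (Φ : (X → ℝ) →ₗ[ℝ] 𝕄 × (Fin N × S) → ℝ) (i : Fin T)

lemma readout_eq (hΦ : IsValueMap W b jstar Sstar Φ) (hpM0 : ∀ m, 0 ≤ pM m)
    (hμ0 : ∀ g, 0 ≤ μ g) (hA0 : ∀ g g', 0 ≤ A g' g) (hW0 : ∀ z m0 g, 0 ≤ W z m0 g)
    (hstat : A *ᵥ μ = μ) :
    ∑ p : 𝕄 × (Fin N × S), b p.1 *
        ((LinearMap.toMatrix' Φ *ᵥ hatGtot pM A μ W b jstar x i.succ) p * W (x i) p.1 p.2)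
      = (∑ m, b (m jstar) *
          (pM m * (promptV b jstar m * mSeqPmOn A μ W m x i ({jstar} ×ˢ Sstar))))
        / hatZ pM A μ W b jstar x i.succ := by
  rw [LinearMap.toMatrix'_mulVec, hatGtot_eq_sum pM A μ W b jstar x hpM0 hμ0 hA0 hW0,
    hΦ.apply_sum _
      fun m0 s hb => hatPost_succ_eq_zero pM A μ W b jstar x hstat i hb s]
  calc _ = ∑ p : 𝕄 × (Fin N × S), if p.2 ∈ ({jstar} ×ˢ Sstar : Finset _) then
          b p.1 * W (x i) p.1 p.2 * hatPost pM A μ W b jstar x i.succ p else 0 := by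
        refine Finset.sum_congr rfl fun p _ => ?_
        by_cases hb : b p.1 = 0
        · simp [hb]
        · split_ifs <;> simp_all [mul_comm, mul_left_comm]
    _ = ∑ g ∈ ({jstar} ×ˢ Sstar : Finset _), (∑ m, b (m g.1) * W (x i) (m g.1) g *
          (pM m * hatJointAt A μ W b jstar m x i.succ g)) / hatZ pM A μ W b jstar x i.succ := by
        rw [Fintype.sum_prod_type_right]
        simp only [Finset.sum_ite_irrel, Finset.sum_const_zero, Finset.sum_ite_mem,
          Finset.univ_inter]
        refine Finset.sum_congr rfl fun g _ => ?_
        simp only [hatPost]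
        exact sum_mul_sum_ite_div (fun m : Fin N → 𝕄 => m g.1) (fun m0 => b m0 * W (x i) m0 g)
          (fun m => pM m * hatJointAt A μ W b jstar m x i.succ g) _
    _ = _ := by
        rw [← Finset.sum_div, Finset.sum_comm]
        congr 1
        refine Finset.sum_congr rfl fun m _ => ?_
        simp only [mSeqPmOn, Finset.mul_sum]
        refine Finset.sum_congr rfl fun g hg => ?_
        obtain ⟨hj, -⟩ := Finset.mem_product.mp hg
        rw [Finset.mem_singleton.mp hj, hatJointAt_succ W b jstar m x A μ hstat]
        ring

lemma readout_eq_of_confined (hΦ : IsValueMap W b jstar Sstar Φ) (hpM0 : ∀ m, 0 ≤ pM m)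
    (hμ0 : ∀ g, 0 ≤ μ g) (hA0 : ∀ g g', 0 ≤ A g' g) (hW0 : ∀ z m0 g, 0 ≤ W z m0 g)
    (hstat : A *ᵥ μ = μ) (hS : ∀ s : S, s ∉ Sstar → ∑ j, mPostH pM A μ W x i (j, s) = 0)
    (hJ : ∀ j : Fin N, j ≠ jstar → ∑ s, mPostH pM A μ W x i (j, s) = 0) :
    ∑ p : 𝕄 × (Fin N × S), b p.1 *
        ((LinearMap.toMatrix' Φ *ᵥ hatGtot pM A μ W b jstar x i.succ) p * W (x i) p.1 p.2)
      = (∑ m, b (m jstar) * (pM m * hatSeqPm A μ W b jstar m x))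
        / hatZ pM A μ W b jstar x i.succ := by
  rw [readout_eq pM A μ W b jstar x Sstar Φ i hΦ hpM0 hμ0 hA0 hW0 hstat]
  congr 1
  refine Finset.sum_congr rfl fun m _ => congrArg _ ?_
  rw [hatSeqPm_eq W b jstar m x A μ hstat, mul_left_comm, mul_mSeqPmOn_eq_mul_mSeqPm A μ W
    fun g hg => pM_mul_mJointAt_eq_zero_of_notMem pM A μ W x hpM0 hμ0 hA0 hW0 hS hJ hg m,
    mul_left_comm]

lemma readout_eq_zero_of_hatSeqP_eq_zero (hΦ : IsValueMap W b jstar Sstar Φ)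
    (hpM0 : ∀ m, 0 ≤ pM m) (hμ0 : ∀ g, 0 ≤ μ g) (hA0 : ∀ g g', 0 ≤ A g' g)
    (hW0 : ∀ z m0 g, 0 ≤ W z m0 g) (hstat : A *ᵥ μ = μ) (h0 : hatSeqP pM A μ W b jstar x = 0) :
    ∑ p : 𝕄 × (Fin N × S), b p.1 *
        ((LinearMap.toMatrix' Φ *ᵥ hatGtot pM A μ W b jstar x i.succ) p * W (x i) p.1 p.2) = 0 := by
  have hzero : ∀ m, pM m * hatSeqPm A μ W b jstar m x = 0 := fun m =>
    (Finset.sum_eq_zero_iff_of_nonneg fun m _ => mul_nonneg (hpM0 m)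
      (hatSeqPm_nonneg W b jstar m x A μ hμ0 hA0 hW0)).mp h0 m (Finset.mem_univ m)
  rw [readout_eq pM A μ W b jstar x Sstar Φ i hΦ hpM0 hμ0 hA0 hW0 hstat,
    Finset.sum_eq_zero fun m _ => ?_, zero_div]
  have hle := mul_le_mul_of_nonneg_left
    (promptV_mul_mSeqPmOn_le_hatSeqPm W b jstar m x A μ hμ0 hA0 hW0 hstat i ({jstar} ×ˢ Sstar))
    (hpM0 m)
  have hnn := mul_nonneg (hpM0 m) (mul_nonneg (promptV_nonneg b jstar m)
    (mSeqPmOn_nonneg A μ W hμ0 hA0 hW0 m x i ({jstar} ×ˢ Sstar)))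
  rw [le_antisymm (hle.trans (hzero m).le) hnn, mul_zero]

end Readout

theorem stmt17_general {𝕄 S X : Type*} {N : ℕ}
    [Fintype 𝕄] [Fintype S] [Fintype X] [DecidableEq 𝕄] [DecidableEq S]
    (pM : (Fin N → 𝕄) → ℝ) (μ : Fin N × S → ℝ)
    (A : Matrix (Fin N × S) (Fin N × S) ℝ) (W : X → 𝕄 → Fin N × S → ℝ)
    (hpM0 : ∀ m, 0 ≤ pM m) (hμ0 : ∀ g, 0 ≤ μ g)
    (hA0 : ∀ g g', 0 ≤ A g' g) (hW0 : ∀ z m0 g, 0 ≤ W z m0 g)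
    (b : 𝕄 → ℝ) (jstar : Fin N)
    -- relaxed multi-memory non-degeneracy with `𝕄* = supp(b)`, `H* = {j*} × S*`
    (Sstar : Finset S)
    (hli : LinearIndependent ℝ
      (fun p : {m0 : 𝕄 // b m0 ≠ 0} × {s : S // s ∈ Sstar} =>
        fun z : X => W z p.1.1 (jstar, p.2.1)))
    (hspan : Submodule.span ℝ
        {f : X → ℝ | ∃ m0 : 𝕄, ∃ s : S,
          b m0 ≠ 0 ∧ s ∈ Sstar ∧ f = fun z => W z m0 (jstar, s)}
      ⊓ Submodule.span ℝ
        {f : X → ℝ |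
          (∃ m0 : 𝕄, ∃ s : S,
            b m0 ≠ 0 ∧ s ∉ Sstar ∧ f = fun z => W z m0 (jstar, s))
          ∨ (∃ m0 : 𝕄, ∃ j : Fin N, ∃ s : S,
            j ≠ jstar ∧ f = fun z => W z m0 (j, s))}
      = ⊥)
    -- stationarity: ergodic chain, full support, `P(H_0) = A P(H_0)`
    (hstat : A.mulVec μ = μ)
    (T : ℕ) :
    ∃ (ΘV : Matrix (𝕄 × (Fin N × S)) X ℝ) (u : 𝕄 × (Fin N × S) → ℝ),
      ∀ x : Fin T → X,
        0 < mSeqP pM A μ W x →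
        -- `Î(x)` is nonempty
        (∃ i0 : Fin T,
          (∀ s : S, s ∉ Sstar → ∑ j, mPostH pM A μ W x i0 (j, s) = 0)
          ∧ (∀ j : Fin N, j ≠ jstar → ∑ s, mPostH pM A μ W x i0 (j, s) = 0)) →
        (∀ i0 : Fin T,
          -- `i0.succ ∈ Î(x)`
          (∀ s : S, s ∉ Sstar → ∑ j, mPostH pM A μ W x i0 (j, s) = 0) →
          (∀ j : Fin N, j ≠ jstar → ∑ s, mPostH pM A μ W x i0 (j, s) = 0) →
          -- (i)
          ((0 < hatZ pM A μ W b jstar x i0.succ →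
            (∑ p : 𝕄 × (Fin N × S), u p *
                ((ΘV.mulVec (hatGtot pM A μ W b jstar x i0.succ)) p *
                  W (x i0) p.1 p.2))
              = ∑ m0, b m0 *
                  ((∑ m, if m jstar = m0 then pM m * hatSeqPm A μ W b jstar m x else 0)
                    / hatZ pM A μ W b jstar x i0.succ))
          -- (ii)
          ∧ ∃ r : ℝ, 0 < r ∧
              (∑ p : 𝕄 × (Fin N × S), u p *
                  ((ΘV.mulVec (hatGtot pM A μ W b jstar x i0.succ)) p *
                    W (x i0) p.1 p.2))
                = r * ∑ m0, b m0 *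
                    ((∑ m, if m jstar = m0 then pM m * mSeqPm A μ W m x else 0)
                      / mSeqP pM A μ W x)))
        -- furthermore: if `P(X̂ = x̂) = 0` the value is `0` at all `i > 1`
        ∧ (hatSeqP pM A μ W b jstar x = 0 →
            ∀ i0 : Fin T,
              (∑ p : 𝕄 × (Fin N × S), u p *
                  ((ΘV.mulVec (hatGtot pM A μ W b jstar x i0.succ)) p *
                    W (x i0) p.1 p.2)) = 0) := by
  obtain ⟨Φ, hΦ⟩ := exists_valueMap W b jstar Sstar hli hspan
  refine ⟨LinearMap.toMatrix' Φ, fun p => b p.1, fun x hx _ => ⟨fun i hS hJ => ?_, fun h0 i =>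
    readout_eq_zero_of_hatSeqP_eq_zero pM A μ W b jstar x Sstar Φ i hΦ hpM0 hμ0 hA0 hW0 hstat h0⟩⟩
  have hnum : ∑ m, b (m jstar) * (pM m * mSeqPm A μ W m x)
      = ∑ m, b (m jstar) * (pM m * hatSeqPm A μ W b jstar m x) := by
    simp only [hatSeqPm_eq W b jstar _ x A μ hstat, mul_left_comm (pM _), ← mul_assoc,
      mul_promptV]
  simp only [readout_eq_of_confined pM A μ W b jstar x Sstar Φ i hΦ hpM0 hμ0 hA0 hW0 hstat hS hJ,
    sum_mul_sum_ite_div, hnum]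
  refine ⟨fun _ => trivial, ?_⟩
  rcases (hatZ_nonneg pM A μ W b jstar x hpM0 hμ0 hA0 hW0 i.succ).eq_or_lt with hZ | hZ
  · refine ⟨1, one_pos, ?_⟩
    rw [← hZ, Finset.sum_eq_zero fun m _ => by
      rw [pM_mul_hatSeqPm_eq_zero_of_hatZ_eq_zero pM A μ W b jstar x hpM0 hμ0 hA0 hW0 hstat
        hZ.symm m, mul_zero]]
    simp
  · exact ⟨mSeqP pM A μ W x / hatZ pM A μ W b jstar x i.succ, div_pos hx hZ, by field_simp⟩

theorem stmt17 {𝕄 S X : Type*} {N : ℕ}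
    [Fintype 𝕄] [Fintype S] [Fintype X] [DecidableEq 𝕄] [DecidableEq S]
    (pM : (Fin N → 𝕄) → ℝ) (μ : Fin N × S → ℝ)
    (A : Matrix (Fin N × S) (Fin N × S) ℝ) (W : X → 𝕄 → Fin N × S → ℝ)
    (hpM0 : ∀ m, 0 ≤ pM m) (hpM1 : ∑ m, pM m = 1)
    (hμ0 : ∀ g, 0 ≤ μ g) (hμ1 : ∑ g, μ g = 1)
    (hA0 : ∀ g g', 0 ≤ A g' g) (hA1 : ∀ g, ∑ g', A g' g = 1)
    (hW0 : ∀ z m0 g, 0 ≤ W z m0 g) (hW1 : ∀ m0 g, ∑ z, W z m0 g = 1)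
    (b : 𝕄 → ℝ) (jstar : Fin N)
    -- relaxed multi-memory non-degeneracy with `𝕄* = supp(b)`, `H* = {j*} × S*`
    (Sstar : Finset S)
    (hli : LinearIndependent ℝ
      (fun p : {m0 : 𝕄 // b m0 ≠ 0} × {s : S // s ∈ Sstar} =>
        fun z : X => W z p.1.1 (jstar, p.2.1)))
    (hspan : Submodule.span ℝ
        {f : X → ℝ | ∃ m0 : 𝕄, ∃ s : S,
          b m0 ≠ 0 ∧ s ∈ Sstar ∧ f = fun z => W z m0 (jstar, s)}
      ⊓ Submodule.span ℝ
        {f : X → ℝ |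
          (∃ m0 : 𝕄, ∃ s : S,
            b m0 ≠ 0 ∧ s ∉ Sstar ∧ f = fun z => W z m0 (jstar, s))
          ∨ (∃ m0 : 𝕄, ∃ j : Fin N, ∃ s : S,
            j ≠ jstar ∧ f = fun z => W z m0 (j, s))}
      = ⊥)
    -- stationarity: ergodic chain, full support, `P(H_0) = A P(H_0)`
    (hErg : ∃ n₀ : ℕ, ∀ n ≥ n₀, ∀ g g' : Fin N × S, 0 < (A ^ n) g' g)
    (hfull : ∀ g, 0 < μ g)
    (hstat : A.mulVec μ = μ)
    (T : ℕ) :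
    ∃ (ΘV : Matrix (𝕄 × (Fin N × S)) X ℝ) (u : 𝕄 × (Fin N × S) → ℝ),
      ∀ x : Fin T → X,
        0 < mSeqP pM A μ W x →
        -- `Î(x)` is nonempty
        (∃ i0 : Fin T,
          (∀ s : S, s ∉ Sstar → ∑ j, mPostH pM A μ W x i0 (j, s) = 0)
          ∧ (∀ j : Fin N, j ≠ jstar → ∑ s, mPostH pM A μ W x i0 (j, s) = 0)) →
        (∀ i0 : Fin T,
          -- `i0.succ ∈ Î(x)`
          (∀ s : S, s ∉ Sstar → ∑ j, mPostH pM A μ W x i0 (j, s) = 0) →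
          (∀ j : Fin N, j ≠ jstar → ∑ s, mPostH pM A μ W x i0 (j, s) = 0) →
          -- (i)
          ((0 < hatZ pM A μ W b jstar x i0.succ →
            (∑ p : 𝕄 × (Fin N × S), u p *
                ((ΘV.mulVec (hatGtot pM A μ W b jstar x i0.succ)) p *
                  W (x i0) p.1 p.2))
              = ∑ m0, b m0 *
                  ((∑ m, if m jstar = m0 then pM m * hatSeqPm A μ W b jstar m x else 0)
                    / hatZ pM A μ W b jstar x i0.succ))
          -- (ii)
          ∧ ∃ r : ℝ, 0 < r ∧
              (∑ p : 𝕄 × (Fin N × S), u p *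
                  ((ΘV.mulVec (hatGtot pM A μ W b jstar x i0.succ)) p *
                    W (x i0) p.1 p.2))
                = r * ∑ m0, b m0 *
                    ((∑ m, if m jstar = m0 then pM m * mSeqPm A μ W m x else 0)
                      / mSeqP pM A μ W x)))
        -- furthermore: if `P(X̂ = x̂) = 0` the value is `0` at all `i > 1`
        ∧ (hatSeqP pM A μ W b jstar x = 0 →
            ∀ i0 : Fin T,
              (∑ p : 𝕄 × (Fin N × S), u p *
                  ((ΘV.mulVec (hatGtot pM A μ W b jstar x i0.succ)) p *
                    W (x i0) p.1 p.2)) = 0) :=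
  stmt17_general pM μ A W hpM0 hμ0 hA0 hW0 b jstar Sstar hli hspan hstat T

end
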